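/- arXiv:2306.12047 — 5 statements merged into one kernel-verified Lean document; each statement's English description precedes it below -/
import Mathlib

section
/- Let U and V be real Banach spaces, R : U → V twice continuously (Fréchet) differentiable on an open set containing the segment from ũ to u, R(u) = 0, ũ ≠ u, and R'(ũ) : U → V a continuous linear bijection with continuous inverse. Set u^C = ũ − R'(ũ)⁻¹ R(ũ), ẽ = u − ũ, e^C = u − u^C. If (1/2) · [ sup_{s ∈ [0,1]} ‖R'(ũ)⁻¹ ∘ R''(ũ + s ẽ)‖ ] · ‖ẽ‖ < 1, then ‖e^C‖ < ‖ẽ‖ (the corrector strictly reduces the error). -/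
/-!
Newton's map `N x = x - R'(ũ)⁻¹ R(x)` fixes the zero `u`, so `e^C = N u - N ũ`. Its derivative
`R'(ũ)⁻¹ (R'(ũ) - R'(x))` vanishes at `ũ` and, by the mean value inequality applied to
`R'(ũ)⁻¹ ∘ R'`, has norm at most `K ‖x - ũ‖` on the segment, `K` being the supremum in the
hypothesis. Integrating this linear growth along the segment gives `‖e^C‖ ≤ K/2 · ‖ẽ‖²`.
-/

open Set

section NormedSpace

variable {E F W : Type*} [NormedAddCommGroup E] [NormedSpace ℝ E]
  [NormedAddCommGroup F] [NormedSpace ℝ F] [NormedAddCommGroup W] [NormedSpace ℝ W]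

theorem add_smul_sub_mem_segment {a b : E} {t : ℝ} (ht : t ∈ Icc 0 1) :
    a + t • (b - a) ∈ segment ℝ a b := by
  rw [segment_eq_image']
  exact ⟨t, ht, rfl⟩

theorem norm_sub_le_of_norm_deriv_le_mul {f f' : ℝ → E} {C b : ℝ} (hb : 0 ≤ b)
    (hf : ∀ t ∈ Icc 0 b, HasDerivAt f (f' t) t) (bound : ∀ t ∈ Ico 0 b, ‖f' t‖ ≤ C * t) :
    ‖f b - f 0‖ ≤ C * b ^ 2 / 2 := by
  have hB : ∀ t : ℝ, HasDerivAt (fun t => C * t ^ 2 / 2) (C * t) t := fun t => by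
    simpa [mul_div_assoc] using ((hasDerivAt_pow 2 t).div_const 2).const_mul C
  exact image_norm_le_of_norm_deriv_right_le_deriv_boundary (f := fun t => f t - f 0)
    (fun t ht => ((hf t ht).sub_const _).continuousAt.continuousWithinAt)
    (fun t ht => ((hf t (Ico_subset_Icc_self ht)).sub_const _).hasDerivWithinAt)
    (by simp) hB bound ⟨hb, le_rfl⟩

theorem norm_sub_sub_fderiv_le_of_norm_fderiv_sub_le {g : E → F} {g' : E → E →L[ℝ] F}
    {a b : E} {L : ℝ} (hg : ∀ x ∈ segment ℝ a b, HasFDerivAt g (g' x) x)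
    (hlip : ∀ x ∈ segment ℝ a b, ‖g' x - g' a‖ ≤ L * ‖x - a‖) :
    ‖g b - g a - g' a (b - a)‖ ≤ L / 2 * ‖b - a‖ ^ 2 := by
  have hderiv : ∀ t ∈ Icc (0 : ℝ) 1,
      HasDerivAt (fun t : ℝ => g (a + t • (b - a)) - t • g' a (b - a))
        (g' (a + t • (b - a)) (b - a) - g' a (b - a)) t := fun t ht => by
    have hline : HasDerivAt (fun t : ℝ => a + t • (b - a)) (b - a) t := by
      simpa using ((hasDerivAt_id t).smul_const (b - a)).const_add a
    have := ((hg _ (add_smul_sub_mem_segment ht)).comp_hasDerivAt t hline).sub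
      ((hasDerivAt_id t).smul_const (g' a (b - a)))
    rwa [one_smul] at this
  have hbound : ∀ t ∈ Ico (0 : ℝ) 1,
      ‖g' (a + t • (b - a)) (b - a) - g' a (b - a)‖ ≤ L * ‖b - a‖ ^ 2 * t := fun t ht => by
    calc ‖g' (a + t • (b - a)) (b - a) - g' a (b - a)‖
        ≤ ‖g' (a + t • (b - a)) - g' a‖ * ‖b - a‖ := by
          rw [← sub_apply]
          exact ContinuousLinearMap.le_opNorm _ _
      _ ≤ L * ‖a + t • (b - a) - a‖ * ‖b - a‖ := by
          gcongr
          exact hlip _ (add_smul_sub_mem_segment (Ico_subset_Icc_self ht))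
      _ = L * ‖b - a‖ ^ 2 * t := by
          rw [add_sub_cancel_left, norm_smul, Real.norm_of_nonneg ht.1]
          ring
  have := norm_sub_le_of_norm_deriv_le_mul zero_le_one hderiv hbound
  simp only [zero_smul, add_zero, one_smul, add_sub_cancel, sub_zero] at this
  calc ‖g b - g a - g' a (b - a)‖ = ‖g b - g' a (b - a) - g a‖ := by rw [sub_right_comm]
    _ ≤ L * ‖b - a‖ ^ 2 * 1 ^ 2 / 2 := this
    _ = L / 2 * ‖b - a‖ ^ 2 := by ring

theorem le_iSup_Icc_of_mem_segment {φ : E → ℝ} {a b x : E}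
    (hφ : ContinuousOn φ (segment ℝ a b)) (hx : x ∈ segment ℝ a b) :
    φ x ≤ ⨆ t : Icc (0 : ℝ) 1, φ (a + (t : ℝ) • (b - a)) := by
  have hline : Continuous fun t : Icc (0 : ℝ) 1 => φ (a + (t : ℝ) • (b - a)) :=
    hφ.comp_continuous (by fun_prop) fun t => add_smul_sub_mem_segment t.2
  rw [segment_eq_image'] at hx
  obtain ⟨t, ht, rfl⟩ := hx
  exact le_ciSup (isCompact_range hline).bddAbove ⟨t, ht⟩

theorem norm_comp_fderiv_sub_le_iSup_mul {R : E → F} {s : Set E} {a b x : E} (hs : IsOpen s)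
    (hR : ContDiffOn ℝ 2 R s) (hseg : segment ℝ a b ⊆ s) (B : F →L[ℝ] W)
    (hx : x ∈ segment ℝ a b) :
    ‖B.comp (fderiv ℝ R x) - B.comp (fderiv ℝ R a)‖ ≤
      (⨆ t : Icc (0 : ℝ) 1, ‖(ContinuousLinearMap.compL ℝ E F W B).comp
        (fderiv ℝ (fderiv ℝ R) (a + (t : ℝ) • (b - a)))‖) * ‖x - a‖ := by
  have hR1 : ContDiffOn ℝ 1 (fderiv ℝ R) s := hR.fderiv_of_isOpen hs (by norm_num)
  refine (convex_segment a b).norm_image_sub_le_of_norm_hasFDerivWithin_le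
    (fun y hy => ((ContinuousLinearMap.compL ℝ E F W B).hasFDerivAt.comp y ?_).hasFDerivWithinAt)
    (fun y => le_iSup_Icc_of_mem_segment
      ((continuousOn_const.clm_comp (hR1.continuousOn_fderiv_of_isOpen hs le_rfl)).norm.mono hseg))
    (left_mem_segment ℝ a b) hx
  exact ((hR1.differentiableOn one_ne_zero).differentiableAt (hs.mem_nhds (hseg hy))).hasFDerivAt

theorem norm_newton_error_le {R : E → F} {R' : E → E →L[ℝ] F} {u ut : E} {A : E ≃L[ℝ] F}
    {L : ℝ} (hR : ∀ x ∈ segment ℝ ut u, HasFDerivAt R (R' x) x)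
    (hA : (A : E →L[ℝ] F) = R' ut) (hu : R u = 0)
    (hlip : ∀ x ∈ segment ℝ ut u,
      ‖(A.symm : F →L[ℝ] E).comp (R' x) - (A.symm : F →L[ℝ] E).comp (R' ut)‖ ≤ L * ‖x - ut‖) :
    ‖u - (ut - A.symm (R ut))‖ ≤ L / 2 * ‖u - ut‖ ^ 2 := by
  have hA' : (A.symm : F →L[ℝ] E).comp (R' ut) = ContinuousLinearMap.id ℝ E := by
    rw [← hA]
    ext y
    simp
  have := norm_sub_sub_fderiv_le_of_norm_fderiv_sub_le
    (fun x hx => (A.symm : F →L[ℝ] E).hasFDerivAt.comp x (hR x hx)) hlip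
  rw [hA', Function.comp_apply, Function.comp_apply, hu, map_zero,
    ContinuousLinearMap.id_apply] at this
  rwa [← norm_neg, show -(u - (ut - A.symm (R ut))) = 0 - A.symm (R ut) - (u - ut) by abel]

end NormedSpace

theorem corrector_linear_error_reduction_general
    {U V : Type*} [NormedAddCommGroup U] [NormedSpace ℝ U]
    [NormedAddCommGroup V] [NormedSpace ℝ V]
    (R : U → V) (u ut : U) (s : Set U) (hs : IsOpen s)
    (hseg : segment ℝ ut u ⊆ s)
    (hR : ContDiffOn ℝ 2 R s)
    (hu : R u = 0) (hne : ut ≠ u)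
    (A : U ≃L[ℝ] V) (hA : (A : U →L[ℝ] V) = fderiv ℝ R ut)
    (hsmall :
      (1 / 2) *
        (⨆ t : Set.Icc (0 : ℝ) 1,
          ‖(ContinuousLinearMap.compL ℝ U V U (A.symm : V →L[ℝ] U)).comp
              (fderiv ℝ (fderiv ℝ R) (ut + (t : ℝ) • (u - ut)))‖) *
        ‖u - ut‖ < 1) :
    ‖u - (ut - A.symm (R ut))‖ < ‖u - ut‖ := by
  have hR' : ∀ x ∈ segment ℝ ut u, HasFDerivAt R (fderiv ℝ R x) x := fun x hx =>
    ((hR.differentiableOn two_ne_zero).differentiableAt (hs.mem_nhds (hseg hx))).hasFDerivAt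
  have hquad := norm_newton_error_le hR' hA hu fun x hx =>
    norm_comp_fderiv_sub_le_iSup_mul hs hR hseg (A.symm : V →L[ℝ] U) hx
  have he : 0 < ‖u - ut‖ := norm_pos_iff.2 (sub_ne_zero.2 hne.symm)
  nlinarith

/-- Linear error reduction: if `(1/2)·(sup_{s∈[0,1]} ‖R'(ut)⁻¹ ∘ R''(ut + s(u-ut))‖)·‖u-ut‖ < 1`
then the corrector strictly reduces the error: `‖u - uC‖ < ‖u - ut‖`,
where `uC = ut - R'(ut)⁻¹ (R ut)` and `ut` plays the role of `ũ`. -/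
theorem corrector_linear_error_reduction
    {U V : Type*} [NormedAddCommGroup U] [NormedSpace ℝ U] [CompleteSpace U]
    [NormedAddCommGroup V] [NormedSpace ℝ V] [CompleteSpace V]
    (R : U → V) (u ut : U) (s : Set U) (hs : IsOpen s)
    (hseg : segment ℝ ut u ⊆ s)
    (hR : ContDiffOn ℝ 2 R s)
    (hu : R u = 0) (hne : ut ≠ u)
    (A : U ≃L[ℝ] V) (hA : (A : U →L[ℝ] V) = fderiv ℝ R ut)
    (hsmall :
      (1 / 2) *
        (⨆ t : Set.Icc (0 : ℝ) 1,
          ‖(ContinuousLinearMap.compL ℝ U V U (A.symm : V →L[ℝ] U)).comp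
              (fderiv ℝ (fderiv ℝ R) (ut + (t : ℝ) • (u - ut)))‖) *
        ‖u - ut‖ < 1) :
    ‖u - (ut - A.symm (R ut))‖ < ‖u - ut‖ :=
  corrector_linear_error_reduction_general R u ut s hs hseg hR hu hne A hA hsmall
end

section
/- Let U and V be real Banach spaces, D ⊆ U a nonempty open set, u₀ ∈ D, and R : D → V continuously (Fréchet) differentiable, with R'(u₀) : U → V a continuous linear bijection with continuous inverse. Suppose there is r > 0 such that the closed ball of radius r centered at u₀ is contained in D, and ‖R'(u₀)⁻¹ ∘ (R'(ũ) − R'(û))‖ ≤ ‖ũ − û‖ / r for all ũ, û in the open ball B(u₀; r), where ‖·‖ is the operator norm on continuous linear maps U → U. Then for every ũ ∈ B(u₀; r), the derivative R'(ũ) : U → V is a continuous linear bijection with continuous inverse. -/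
/-!
Write `T = R'(ut)` and `A = R'(u₀)`. The Lipschitz bound at the pair `(u₀, ut)` gives
`‖A⁻¹ (A - T)‖ ≤ ‖u₀ - ut‖ / r < 1`, so `A⁻¹ T = 1 - A⁻¹ (A - T)` is invertible by the Neumann
series in the Banach algebra `U →L[ℝ] U`, and hence so is `T = A ∘ (A⁻¹ T)`.
-/

namespace ContinuousLinearMap

theorem IsInvertible.of_isUnit {R M : Type*} [Semiring R] [TopologicalSpace M]
    [AddCommMonoid M] [Module R M] {f : M →L[R] M} (hf : IsUnit f) : f.IsInvertible := by
  obtain ⟨u, rfl⟩ := hf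
  exact ⟨ContinuousLinearEquiv.unitsEquiv R M u, rfl⟩

theorem isInvertible_of_norm_symm_comp_sub_lt_one {𝕜 U V : Type*} [NontriviallyNormedField 𝕜]
    [NormedAddCommGroup U] [NormedSpace 𝕜 U] [CompleteSpace U]
    [NormedAddCommGroup V] [NormedSpace 𝕜 V] {A : U ≃L[𝕜] V} {T : U →L[𝕜] V}
    (h : ‖(A.symm : V →L[𝕜] U) ∘L ((A : U →L[𝕜] V) - T)‖ < 1) : T.IsInvertible := by
  have hsplit : (A.symm : V →L[𝕜] U) ∘L T =
      1 - (A.symm : V →L[𝕜] U) ∘L ((A : U →L[𝕜] V) - T) := by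
    ext x
    simp
  rw [← isInvertible_equiv_comp (e := A.symm), hsplit]
  exact .of_isUnit (isUnit_one_sub_of_norm_lt_one h)

end ContinuousLinearMap

theorem newton_kantorovich_invertibility_general
    {U V : Type*} [NormedAddCommGroup U] [NormedSpace ℝ U] [CompleteSpace U]
    [NormedAddCommGroup V] [NormedSpace ℝ V]
    (u₀ : U)
    (R : U → V)
    (A : U ≃L[ℝ] V) (hA : (A : U →L[ℝ] V) = fderiv ℝ R u₀)
    (r : ℝ) (hr : 0 < r)
    (hLip : ∀ ut ∈ Metric.ball u₀ r, ∀ uh ∈ Metric.ball u₀ r,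
      ‖(A.symm : V →L[ℝ] U).comp (fderiv ℝ R ut - fderiv ℝ R uh)‖ ≤ ‖ut - uh‖ / r) :
    ∀ ut ∈ Metric.ball u₀ r, ∃ B : U ≃L[ℝ] V, (B : U →L[ℝ] V) = fderiv ℝ R ut := by
  intro ut hut
  refine ContinuousLinearMap.isInvertible_of_norm_symm_comp_sub_lt_one (A := A) ?_
  have hdist : ‖u₀ - ut‖ < r := by rwa [← dist_eq_norm, dist_comm]
  calc ‖(A.symm : V →L[ℝ] U) ∘L ((A : U →L[ℝ] V) - fderiv ℝ R ut)‖
      ≤ ‖u₀ - ut‖ / r := hA ▸ hLip u₀ (Metric.mem_ball_self hr) ut hut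
    _ < 1 := (div_lt_one hr).2 hdist

/-- Newton–Kantorovich, first conclusion: under the Lipschitz-type hypothesis on the
derivative, `R'(ut)` is a continuous linear bijection with continuous inverse at every
point `ut` of the open ball `B(u₀; r)`. -/
theorem newton_kantorovich_invertibility
    {U V : Type*} [NormedAddCommGroup U] [NormedSpace ℝ U] [CompleteSpace U]
    [NormedAddCommGroup V] [NormedSpace ℝ V] [CompleteSpace V]
    (D : Set U) (hD : IsOpen D) (hDne : D.Nonempty)
    (u₀ : U) (hu₀ : u₀ ∈ D)
    (R : U → V) (hR : ContDiffOn ℝ 1 R D)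
    (A : U ≃L[ℝ] V) (hA : (A : U →L[ℝ] V) = fderiv ℝ R u₀)
    (r : ℝ) (hr : 0 < r)
    (hball : Metric.closedBall u₀ r ⊆ D)
    (hLip : ∀ ut ∈ Metric.ball u₀ r, ∀ uh ∈ Metric.ball u₀ r,
      ‖(A.symm : V →L[ℝ] U).comp (fderiv ℝ R ut - fderiv ℝ R uh)‖ ≤ ‖ut - uh‖ / r) :
    ∀ ut ∈ Metric.ball u₀ r, ∃ B : U ≃L[ℝ] V, (B : U →L[ℝ] V) = fderiv ℝ R ut :=
  newton_kantorovich_invertibility_general u₀ R A hA r hr hLip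
end

section
/- Newton–Kantorovich convergence: Let U and V be real Banach spaces, D ⊆ U a nonempty open set, u₀ ∈ D, and R : D → V continuously (Fréchet) differentiable, with R'(u₀) : U → V a continuous linear bijection with continuous inverse. Suppose there is r > 0 such that: (i) the closed ball of radius r centered at u₀ is contained in D; (ii) ‖R'(u₀)⁻¹(R(u₀))‖ ≤ r/2; and (iii) ‖R'(u₀)⁻¹ ∘ (R'(ũ) − R'(û))‖ ≤ ‖ũ − û‖ / r for all ũ, û in the open ball B(u₀; r). Then the Newton sequence defined by u_k = u_{k−1} − R'(u_{k−1})⁻¹ R(u_{k−1}) for k ≥ 1 is well defined (each R'(u_{k−1}) being invertible), satisfies u_k ∈ B(u₀; r) for all k ≥ 0, and converges to a point u in the closed ball with R(u) = 0; moreover ‖u − u_k‖ ≤ r / 2^k for every k ≥ 0. -/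
open Filter Topology

/-- Auxiliary map for Newton–Kantorovich: `A⁻¹ ∘ R'(w)`. -/
noncomputable def nkT {U V : Type*} [NormedAddCommGroup U] [NormedSpace ℝ U]
    [NormedAddCommGroup V] [NormedSpace ℝ V]
    (A : U ≃L[ℝ] V) (R : U → V) (w : U) : U →L[ℝ] U :=
  (A.symm : V →L[ℝ] U).comp (fderiv ℝ R w)

/-- Auxiliary Newton sequence, using `Ring.inverse` so that it is total. -/
noncomputable def nkSeq {U V : Type*} [NormedAddCommGroup U] [NormedSpace ℝ U]
    [NormedAddCommGroup V] [NormedSpace ℝ V]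
    (A : U ≃L[ℝ] V) (R : U → V) (u₀ : U) : ℕ → U
  | 0 => u₀
  | k + 1 => nkSeq A R u₀ k -
      Ring.inverse (nkT A R (nkSeq A R u₀ k)) (A.symm (R (nkSeq A R u₀ k)))

set_option maxHeartbeats 1000000 in
/-- Newton–Kantorovich convergence: the Newton sequence
`u_k = u_{k-1} - R'(u_{k-1})⁻¹ (R (u_{k-1}))` starting at `u₀` is well defined
(each `R'(u_{k-1})` being a continuous linear bijection with continuous inverse),
stays in the open ball `B(u₀; r)`, and converges to a zero `u` of `R` in the closed ball,
with `‖u - u_k‖ ≤ r / 2^k` for every `k`. -/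
theorem newton_kantorovich_convergence
    {U V : Type*} [NormedAddCommGroup U] [NormedSpace ℝ U] [CompleteSpace U]
    [NormedAddCommGroup V] [NormedSpace ℝ V] [CompleteSpace V]
    (D : Set U) (hD : IsOpen D) (hDne : D.Nonempty)
    (u₀ : U) (hu₀ : u₀ ∈ D)
    (R : U → V) (hR : ContDiffOn ℝ 1 R D)
    (A : U ≃L[ℝ] V) (hA : (A : U →L[ℝ] V) = fderiv ℝ R u₀)
    (r : ℝ) (hr : 0 < r)
    (hball : Metric.closedBall u₀ r ⊆ D)
    (hinit : ‖A.symm (R u₀)‖ ≤ r / 2)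
    (hLip : ∀ ut ∈ Metric.ball u₀ r, ∀ uh ∈ Metric.ball u₀ r,
      ‖(A.symm : V →L[ℝ] U).comp (fderiv ℝ R ut - fderiv ℝ R uh)‖ ≤ ‖ut - uh‖ / r) :
    ∃ useq : ℕ → U, useq 0 = u₀ ∧
      (∀ k : ℕ, ∃ B : U ≃L[ℝ] V, (B : U →L[ℝ] V) = fderiv ℝ R (useq k) ∧
        useq (k + 1) = useq k - B.symm (R (useq k))) ∧
      (∀ k : ℕ, useq k ∈ Metric.ball u₀ r) ∧
      ∃ u ∈ Metric.closedBall u₀ r,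
        Tendsto useq atTop (𝓝 u) ∧ R u = 0 ∧
        ∀ k : ℕ, ‖u - useq k‖ ≤ r / 2 ^ k := by
  classical
  have hballD : Metric.ball u₀ r ⊆ D := fun x hx => hball (Metric.ball_subset_closedBall hx)
  set T : U → (U →L[ℝ] U) := nkT A R with hTdef
  have hTapp : ∀ w : U, T w = (A.symm : V →L[ℝ] U).comp (fderiv ℝ R w) := fun w => rfl
  have hfd : ∀ w ∈ Metric.ball u₀ r, HasFDerivAt R (fderiv ℝ R w) w := fun w hw =>
    ((hR.differentiableOn one_ne_zero).differentiableAt (hD.mem_nhds (hballD hw))).hasFDerivAt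
  have hT1 : T u₀ = 1 := by
    ext x
    simp [hTapp, nkT, ← hA]
  have hTsub : ∀ a b : U,
      (A.symm : V →L[ℝ] U).comp (fderiv ℝ R a - fderiv ℝ R b) = T a - T b := by
    intro a b
    ext x
    simp [hTapp]
  have hTnear : ∀ w ∈ Metric.ball u₀ r, ‖T w - 1‖ ≤ ‖w - u₀‖ / r := by
    intro w hw
    have h := hLip w hw u₀ (Metric.mem_ball_self hr)
    rwa [hTsub, hT1] at h
  have hTlt : ∀ w ∈ Metric.ball u₀ r, ‖T w - 1‖ < 1 := by
    intro w hw
    refine lt_of_le_of_lt (hTnear w hw) ?_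
    rw [div_lt_one hr]
    exact mem_ball_iff_norm.mp hw
  have hUnit : ∀ w ∈ Metric.ball u₀ r, IsUnit (T w) := by
    intro w hw
    have h : ‖1 - T w‖ < 1 := by rw [norm_sub_rev]; exact hTlt w hw
    have := (Units.oneSub (1 - T w) h).isUnit
    simpa using this
  have hInv : ∀ w ∈ Metric.ball u₀ r, ∀ q : ℝ, ‖T w - 1‖ ≤ q → q < 1 →
      ‖Ring.inverse (T w)‖ ≤ (1 - q)⁻¹ := by
    intro w hw q hq hq1
    set C := Ring.inverse (T w) with hC
    have hmul : T w * C = 1 := Ring.mul_inverse_cancel _ (hUnit w hw)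
    have hCeq : C = 1 - (T w - 1) * C := by
      rw [sub_mul, one_mul, hmul, sub_sub_cancel]
    have h1 : ‖(1 : U →L[ℝ] U)‖ ≤ 1 := by
      rw [ContinuousLinearMap.one_def]; exact ContinuousLinearMap.norm_id_le
    have h2 : ‖(T w - 1) * C‖ ≤ ‖T w - 1‖ * ‖C‖ := norm_mul_le _ _
    have hnorm : ‖C‖ ≤ 1 + q * ‖C‖ := by
      calc ‖C‖ = ‖1 - (T w - 1) * C‖ := by rw [← hCeq]
        _ ≤ ‖(1 : U →L[ℝ] U)‖ + ‖(T w - 1) * C‖ := norm_sub_le _ _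
        _ ≤ 1 + q * ‖C‖ := by nlinarith [norm_nonneg C]
    have h0 : 0 < 1 - q := by linarith
    rw [inv_eq_one_div, le_div_iff₀ h0]
    nlinarith [norm_nonneg C]
  -- quadratic Taylor estimate
  have hquad : ∀ a ∈ Metric.ball u₀ r, ∀ b ∈ Metric.ball u₀ r,
      ‖A.symm (R b) - A.symm (R a) - T a (b - a)‖ ≤ ‖b - a‖ ^ 2 / (2 * r) := by
    intro a ha b hb
    set Δ := b - a with hΔ
    set f : ℝ → U := fun t => A.symm (R (a + t • Δ)) - t • (T a Δ) - A.symm (R a) with hf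
    set φ : ℝ → U := fun t => (T (a + t • Δ) - T a) Δ with hφ
    have hmem : ∀ t ∈ Set.Icc (0:ℝ) 1, a + t • Δ ∈ Metric.ball u₀ r := fun t ht =>
      (convex_ball u₀ r).add_smul_sub_mem ha hb ht
    have hder : ∀ t ∈ Set.Icc (0:ℝ) 1, HasDerivAt f (φ t) t := by
      intro t ht
      have h1 : HasDerivAt (fun s : ℝ => a + s • Δ) Δ t := by
        simpa using ((hasDerivAt_id t).smul_const Δ).const_add a
      have h2 := (hfd _ (hmem t ht)).comp_hasDerivAt t h1
      have h3 := ((A.symm : V →L[ℝ] U).hasFDerivAt).comp_hasDerivAt t h2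
      have h4 : HasDerivAt (fun s : ℝ => s • (T a Δ)) (T a Δ) t := by
        simpa using (hasDerivAt_id t).smul_const (T a Δ)
      have h5 := (h3.sub h4).sub_const (A.symm (R a))
      convert h5 using 1
      show (T (a + t • Δ) - T a) Δ = _
      rw [ContinuousLinearMap.sub_apply]
      rfl
      rfl
    have hbound : ∀ t ∈ Set.Ico (0:ℝ) 1, ‖φ t‖ ≤ (‖Δ‖ ^ 2 / (2 * r)) * (2 * t) := by
      intro t ht
      have hmemt : a + t • Δ ∈ Metric.ball u₀ r := hmem t ⟨ht.1, le_of_lt ht.2⟩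
      have h := hLip _ hmemt a ha
      rw [hTsub] at h
      have h' : ‖T (a + t • Δ) - T a‖ ≤ t * ‖Δ‖ / r := by
        have he : a + t • Δ - a = t • Δ := by abel
        rw [he] at h
        rwa [norm_smul, Real.norm_eq_abs, abs_of_nonneg ht.1] at h
      calc ‖φ t‖ ≤ ‖T (a + t • Δ) - T a‖ * ‖Δ‖ := ContinuousLinearMap.le_opNorm _ _
        _ ≤ (t * ‖Δ‖ / r) * ‖Δ‖ := mul_le_mul_of_nonneg_right h' (norm_nonneg Δ)
        _ = (‖Δ‖ ^ 2 / (2 * r)) * (2 * t) := by field_simp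
    have hB : ∀ x : ℝ, HasDerivAt (fun t : ℝ => (‖Δ‖ ^ 2 / (2 * r)) * t ^ 2)
        ((‖Δ‖ ^ 2 / (2 * r)) * (2 * x)) x := by
      intro x
      have := (hasDerivAt_pow 2 x).const_mul (‖Δ‖ ^ 2 / (2 * r))
      simpa using this
    have key := image_norm_le_of_norm_deriv_right_le_deriv_boundary
      (f := f) (f' := φ) (a := (0:ℝ)) (b := (1:ℝ))
      (fun t ht => (hder t ht).continuousAt.continuousWithinAt)
      (fun t ht => (hder t (Set.Ico_subset_Icc_self ht)).hasDerivWithinAt)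
      (by simp [hf]) hB hbound
    have hx1 := key (Set.right_mem_Icc.mpr zero_le_one)
    have hfb : f 1 = A.symm (R b) - A.symm (R a) - T a Δ := by
      simp only [hf, one_smul]
      rw [show a + Δ = b from by rw [hΔ]; abel, sub_right_comm]
    rw [hfb] at hx1
    simpa using hx1
  -- the Newton iteration as a total function
  set useq : ℕ → U := nkSeq A R u₀ with huseqdef
  have h0 : useq 0 = u₀ := rfl
  have hS : ∀ k, useq (k + 1) = useq k - Ring.inverse (T (useq k)) (A.symm (R (useq k))) :=
    fun k => rfl
  -- the main induction
  have key : ∀ k : ℕ, ‖useq k - u₀‖ ≤ r - r * (1/2) ^ k ∧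
      ‖useq (k + 1) - useq k‖ ≤ r * (1/2) ^ (k + 1) ∧
      ‖A.symm (R (useq k))‖ ≤ r * (1/2) ^ k := by
    intro k
    induction k with
    | zero =>
      refine ⟨by simp [h0], ?_, ?_⟩
      · have he : useq 1 - useq 0 = -(A.symm (R u₀)) := by
          rw [hS 0, h0, hT1, Ring.inverse_one]
          simp
        rw [he, norm_neg]
        calc ‖A.symm (R u₀)‖ ≤ r / 2 := hinit
          _ = r * (1/2) ^ (0 + 1) := by ring
      · rw [h0]
        calc ‖A.symm (R u₀)‖ ≤ r / 2 := hinit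
          _ ≤ r * (1/2) ^ 0 := by nlinarith
    | succ k ih =>
      obtain ⟨ih1, ih2, _⟩ := ih
      have hpk : (0:ℝ) < (1/2) ^ k := by positivity
      have hpk1 : (0:ℝ) < (1/2 : ℝ) ^ (k + 1) := by positivity
      have hmemk : useq k ∈ Metric.ball u₀ r := by
        rw [mem_ball_iff_norm]
        nlinarith [mul_pos hr hpk1]
      have h1' : ‖useq (k + 1) - u₀‖ ≤ r - r * (1/2) ^ (k + 1) := by
        have htri := dist_triangle (useq (k + 1)) (useq k) u₀
        simp only [dist_eq_norm] at htri
        calc ‖useq (k + 1) - u₀‖ ≤ ‖useq (k + 1) - useq k‖ + ‖useq k - u₀‖ := htri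
          _ ≤ r * (1/2) ^ (k + 1) + (r - r * (1/2) ^ k) := add_le_add ih2 ih1
          _ = r - r * (1/2) ^ (k + 1) := by ring
      have hmemk1 : useq (k + 1) ∈ Metric.ball u₀ r := by
        rw [mem_ball_iff_norm]
        nlinarith [mul_pos hr hpk1]
      have hTa : ∀ x : U, T (useq k) (Ring.inverse (T (useq k)) x) = x := by
        intro x
        have hm : T (useq k) * Ring.inverse (T (useq k)) = 1 :=
          Ring.mul_inverse_cancel _ (hUnit _ hmemk)
        calc T (useq k) (Ring.inverse (T (useq k)) x)
            = (T (useq k) * Ring.inverse (T (useq k))) x := rfl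
          _ = x := by rw [hm]; rfl
      have hzero : T (useq k) (useq (k + 1) - useq k) = -(A.symm (R (useq k))) := by
        rw [hS k]
        have he : useq k - Ring.inverse (T (useq k)) (A.symm (R (useq k))) - useq k
            = -(Ring.inverse (T (useq k)) (A.symm (R (useq k)))) := by abel
        rw [he, map_neg, hTa]
      have hARb : ‖A.symm (R (useq (k + 1)))‖ ≤ ‖useq (k + 1) - useq k‖ ^ 2 / (2 * r) := by
        have h := hquad (useq k) hmemk (useq (k + 1)) hmemk1
        rw [hzero] at h
        simpa using h
      have hARb' : ‖A.symm (R (useq (k + 1)))‖ ≤ r * ((1/2 : ℝ) ^ (k + 1)) ^ 2 / 2 := by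
        refine hARb.trans ?_
        have h2 : ‖useq (k + 1) - useq k‖ ^ 2 ≤ (r * (1/2) ^ (k + 1)) ^ 2 :=
          pow_le_pow_left₀ (norm_nonneg _) ih2 2
        calc ‖useq (k + 1) - useq k‖ ^ 2 / (2 * r)
            ≤ (r * (1/2) ^ (k + 1)) ^ 2 / (2 * r) := by gcongr
          _ = r * ((1/2 : ℝ) ^ (k + 1)) ^ 2 / 2 := by
              field_simp
      have hinvb : ‖Ring.inverse (T (useq (k + 1)))‖ ≤ ((1/2 : ℝ) ^ (k + 1))⁻¹ := by
        have hq : ‖T (useq (k + 1)) - 1‖ ≤ 1 - (1/2) ^ (k + 1) := by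
          refine (hTnear _ hmemk1).trans ?_
          rw [div_le_iff₀ hr]
          nlinarith [mul_pos hr hpk1]
        have h := hInv _ hmemk1 _ hq (by nlinarith)
        rwa [sub_sub_cancel] at h
      refine ⟨h1', ?_, ?_⟩
      · rw [hS (k + 1)]
        have he : useq (k+1) - Ring.inverse (T (useq (k+1))) (A.symm (R (useq (k+1)))) - useq (k+1)
            = -(Ring.inverse (T (useq (k+1))) (A.symm (R (useq (k+1))))) := by abel
        rw [he, norm_neg]
        calc ‖Ring.inverse (T (useq (k+1))) (A.symm (R (useq (k+1))))‖
            ≤ ‖Ring.inverse (T (useq (k+1)))‖ * ‖A.symm (R (useq (k+1)))‖ :=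
              ContinuousLinearMap.le_opNorm _ _
          _ ≤ ((1/2 : ℝ) ^ (k+1))⁻¹ * (r * ((1/2 : ℝ) ^ (k + 1)) ^ 2 / 2) :=
              mul_le_mul hinvb hARb' (norm_nonneg _) (by positivity)
          _ = r * (1/2) ^ (k + 1 + 1) := by
              rw [pow_succ ((1:ℝ)/2) (k+1)]
              field_simp
      · refine hARb'.trans ?_
        have hle1 : ((1/2 : ℝ)) ^ (k+1) ≤ 1 := pow_le_one₀ (by norm_num) (by norm_num)
        nlinarith [mul_pos hr hpk1]
  have hmem : ∀ k, useq k ∈ Metric.ball u₀ r := by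
    intro k
    have h := (key k).1
    have hp : (0:ℝ) < (1/2) ^ k := by positivity
    rw [mem_ball_iff_norm]
    nlinarith
  have hdist : ∀ n, dist (useq n) (useq (n + 1)) ≤ (r / 2) * (1/2) ^ n := by
    intro n
    rw [dist_comm, dist_eq_norm]
    calc ‖useq (n + 1) - useq n‖ ≤ r * (1/2) ^ (n + 1) := (key n).2.1
      _ = (r / 2) * (1/2) ^ n := by ring
  have hc : CauchySeq useq := cauchySeq_of_le_geometric (1/2) (r/2) (by norm_num) hdist
  obtain ⟨u, hu⟩ := cauchySeq_tendsto_of_complete hc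
  have hdist2 : ∀ n, dist (useq n) u ≤ r * (1/2) ^ n := by
    intro n
    have h := dist_le_of_le_geometric_of_tendsto (1/2) (r/2) (by norm_num) hdist hu n
    calc dist (useq n) u ≤ (r/2) * (1/2) ^ n / (1 - 1/2) := h
      _ = r * (1/2) ^ n := by ring
  have hfinal : ∀ k, ‖u - useq k‖ ≤ r / 2 ^ k := by
    intro k
    have h := hdist2 k
    rw [dist_eq_norm, norm_sub_rev] at h
    calc ‖u - useq k‖ ≤ r * (1/2) ^ k := h
      _ = r / 2 ^ k := by rw [div_pow, one_pow, mul_one_div]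
  have humem : u ∈ Metric.closedBall u₀ r := by
    rw [Metric.mem_closedBall, dist_eq_norm]
    have h := hfinal 0
    simpa [h0] using h
  have hg0 : Tendsto (fun k : ℕ => r * (1/2 : ℝ) ^ k) atTop (𝓝 0) := by
    have := (tendsto_pow_atTop_nhds_zero_of_lt_one
      (by norm_num : (0:ℝ) ≤ 1/2) (by norm_num : (1/2 : ℝ) < 1)).const_mul r
    simpa using this
  have hR0 : Tendsto (fun k => A.symm (R (useq k))) atTop (𝓝 0) :=
    squeeze_zero_norm (fun k => (key k).2.2) hg0
  have hRcont : ContinuousAt R u := hR.continuousOn.continuousAt (hD.mem_nhds (hball humem))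
  have h2 : Tendsto (fun k => A.symm (R (useq k))) atTop (𝓝 (A.symm (R u))) := by
    have hc2 : ContinuousAt (fun x => A.symm (R x)) u :=
      A.symm.continuous.continuousAt.comp hRcont
    exact hc2.tendsto.comp hu
  have hARu : A.symm (R u) = 0 := tendsto_nhds_unique h2 hR0
  have hRu : R u = 0 := by
    have h := congrArg (fun x => A x) hARu
    simpa using h
  refine ⟨useq, h0, ?_, hmem, u, humem, hu, hRu, hfinal⟩
  intro k
  have hu1 : IsUnit (T (useq k)) := hUnit _ (hmem k)
  refine ⟨(ContinuousLinearEquiv.ofUnit hu1.unit).trans A, ?_, ?_⟩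
  · ext x
    have hux : (hu1.unit : U →L[ℝ] U) = T (useq k) := hu1.unit_spec
    show A ((hu1.unit : U →L[ℝ] U) x) = fderiv ℝ R (useq k) x
    rw [hux]
    simp [hTapp, nkT]
  · rw [hS k]
    congr 1
    have hri := Ring.inverse_unit hu1.unit
    rw [hu1.unit_spec] at hri
    rw [hri]
    rfl
end

section
/- Newton–Kantorovich uniqueness: Let U and V be real Banach spaces, D ⊆ U a nonempty open set, u₀ ∈ D, and R : D → V continuously (Fréchet) differentiable, with R'(u₀) : U → V a continuous linear bijection with continuous inverse. Suppose there is r > 0 such that: (i) the closed ball of radius r centered at u₀ is contained in D; (ii) ‖R'(u₀)⁻¹(R(u₀))‖ ≤ r/2; and (iii) ‖R'(u₀)⁻¹ ∘ (R'(ũ) − R'(û))‖ ≤ ‖ũ − û‖ / r for all ũ, û in the open ball B(u₀; r). Then R has at most one zero in the closed ball of radius r centered at u₀: if u and w lie in the closed ball and R(u) = R(w) = 0, then u = w. -/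
open Metric Set Filter Topology

/-- Auxiliary scalar error sequence for the Newton–Kantorovich uniqueness proof. -/
private noncomputable def nkE : ℕ → ℝ
  | 0 => 1
  | n + 1 => nkE n - (nkE n) ^ 2 / 2

@[simp] private lemma nkE_zero : nkE 0 = 1 := rfl
private lemma nkE_succ (n : ℕ) : nkE (n + 1) = nkE n - (nkE n) ^ 2 / 2 := rfl

private lemma nkE_bounds : ∀ n : ℕ, 0 ≤ nkE n ∧ nkE n ≤ 2 / (n + 2) := by
  intro n
  induction n with
  | zero => norm_num
  | succ n ih =>
    obtain ⟨h0, h1⟩ := ih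
    have hn2 : (0:ℝ) < (n:ℝ) + 2 := by positivity
    have hn3 : (0:ℝ) < (n:ℝ) + 3 := by positivity
    have hle1 : nkE n ≤ 1 := h1.trans (by rw [div_le_one hn2]; linarith)
    rw [nkE_succ]
    constructor
    · nlinarith
    · push_cast
      have hc : (2:ℝ) / (n + 2) ≤ 1 := by rw [div_le_one hn2]; linarith
      -- g(x) = x - x^2/2 is monotone on [0,1]
      have hg : nkE n - (nkE n) ^ 2 / 2 ≤ 2 / ((n:ℝ) + 2) - (2 / ((n:ℝ) + 2)) ^ 2 / 2 := by
        nlinarith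
      have heq : (2:ℝ) / ((n:ℝ) + 2) - (2 / ((n:ℝ) + 2)) ^ 2 / 2
          = 2 * ((n:ℝ) + 1) / ((n:ℝ) + 2) ^ 2 := by
        field_simp
        ring
      have hfin : (2:ℝ) * ((n:ℝ) + 1) / ((n:ℝ) + 2) ^ 2 ≤ 2 / ((n:ℝ) + 3) := by
        rw [div_le_div_iff₀ (by positivity) hn3]
        nlinarith
      have h13 : ((n:ℝ) + 1 + 2) = (n:ℝ) + 3 := by ring
      rw [h13]
      linarith [heq ▸ (hg.trans_eq heq)]

set_option maxHeartbeats 1000000 in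
/-- Newton–Kantorovich uniqueness: under the Newton–Kantorovich hypotheses, `R` has at
most one zero in the closed ball of radius `r` centered at `u₀`. -/
theorem newton_kantorovich_uniqueness
    {U V : Type*} [NormedAddCommGroup U] [NormedSpace ℝ U] [CompleteSpace U]
    [NormedAddCommGroup V] [NormedSpace ℝ V] [CompleteSpace V]
    (D : Set U) (hD : IsOpen D) (hDne : D.Nonempty)
    (u₀ : U) (hu₀ : u₀ ∈ D)
    (R : U → V) (hR : ContDiffOn ℝ 1 R D)
    (A : U ≃L[ℝ] V) (hA : (A : U →L[ℝ] V) = fderiv ℝ R u₀)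
    (r : ℝ) (hr : 0 < r)
    (hball : Metric.closedBall u₀ r ⊆ D)
    (hinit : ‖A.symm (R u₀)‖ ≤ r / 2)
    (hLip : ∀ ut ∈ Metric.ball u₀ r, ∀ uh ∈ Metric.ball u₀ r,
      ‖(A.symm : V →L[ℝ] U).comp (fderiv ℝ R ut - fderiv ℝ R uh)‖ ≤ ‖ut - uh‖ / r) :
    ∀ u ∈ Metric.closedBall u₀ r, ∀ w ∈ Metric.closedBall u₀ r,
      R u = 0 → R w = 0 → u = w := by
  intro u hu w hw hRu hRw
  set As : V →L[ℝ] U := (A.symm : V →L[ℝ] U) with hAs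
  have hdiff : ∀ x ∈ D, DifferentiableAt ℝ R x := fun x hx =>
    (hR.differentiableOn one_ne_zero).differentiableAt (hD.mem_nhds hx)
  have hcont : ContinuousOn (fderiv ℝ R) D :=
    hR.continuousOn_fderiv_of_isOpen hD le_rfl
  -- Step 1: extend the Lipschitz bound at the center to the closed ball.
  have hL : ∀ x ∈ Metric.closedBall u₀ r,
      ‖As.comp (fderiv ℝ R u₀ - fderiv ℝ R x)‖ ≤ ‖x - u₀‖ / r := by
    intro x hx
    have hxr : ‖x - u₀‖ ≤ r := by
      rw [Metric.mem_closedBall, dist_eq_norm] at hx; exact hx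
    set ξ : ℝ → U := fun s => u₀ + s • (x - u₀) with hξ
    have hξ1 : ξ 1 = x := by simp [hξ]
    have hξball : ∀ s ∈ Ioo (0:ℝ) 1, ξ s ∈ Metric.ball u₀ r := by
      intro s hs
      rw [Metric.mem_ball, dist_eq_norm]
      have : ξ s - u₀ = s • (x - u₀) := by simp [hξ]
      rw [this, norm_smul, Real.norm_eq_abs, abs_of_pos hs.1]
      calc s * ‖x - u₀‖ ≤ s * r := by
            exact mul_le_mul_of_nonneg_left hxr hs.1.le
        _ < 1 * r := by exact mul_lt_mul_of_pos_right hs.2 hr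
        _ = r := one_mul r
    haveI : (𝓝[Ioo (0:ℝ) 1] 1).NeBot := right_nhdsWithin_Ioo_neBot one_pos
    have hξcont : Tendsto ξ (𝓝[Ioo (0:ℝ) 1] 1) (𝓝 x) := by
      have : Continuous ξ := by
        apply continuous_const.add (continuous_id.smul continuous_const)
      exact hξ1 ▸ (this.tendsto 1).mono_left nhdsWithin_le_nhds
    have hξD : Tendsto ξ (𝓝[Ioo (0:ℝ) 1] 1) (𝓝[D] x) := by
      apply tendsto_nhdsWithin_of_tendsto_nhds_of_eventually_within _ hξcont
      filter_upwards [eventually_mem_nhdsWithin] with s hs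
      exact hD.interior_eq ▸ (Metric.ball_subset_ball le_rfl).trans
        ((Metric.ball_subset_closedBall).trans hball) (hξball s hs)
    have hfd : Tendsto (fun s => fderiv ℝ R (ξ s)) (𝓝[Ioo (0:ℝ) 1] 1)
        (𝓝 (fderiv ℝ R x)) := (hcont x (hball hx)).tendsto.comp hξD
    have hgcont : Tendsto (fun s => ‖As.comp (fderiv ℝ R u₀ - fderiv ℝ R (ξ s))‖)
        (𝓝[Ioo (0:ℝ) 1] 1) (𝓝 ‖As.comp (fderiv ℝ R u₀ - fderiv ℝ R x)‖) := by
      have hcomp : Continuous (fun T : U →L[ℝ] V => ‖As.comp (fderiv ℝ R u₀ - T)‖) := by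
        have h1 : Continuous (fun T : U →L[ℝ] V =>
            (ContinuousLinearMap.compL ℝ U V U As) (fderiv ℝ R u₀ - T)) :=
          (ContinuousLinearMap.compL ℝ U V U As).continuous.comp
            (continuous_const.sub continuous_id)
        exact continuous_norm.comp h1
      exact (hcomp.tendsto _).comp hfd
    refine le_of_tendsto hgcont ?_
    filter_upwards [eventually_mem_nhdsWithin] with s hs
    have hb := hLip u₀ (Metric.mem_ball_self hr) (ξ s) (hξball s hs)
    have h1 : ‖u₀ - ξ s‖ = s * ‖x - u₀‖ := by
      have : u₀ - ξ s = -(s • (x - u₀)) := by simp [hξ]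
      rw [this, norm_neg, norm_smul, Real.norm_eq_abs, abs_of_pos hs.1]
    calc ‖As.comp (fderiv ℝ R u₀ - fderiv ℝ R (ξ s))‖ ≤ ‖u₀ - ξ s‖ / r := hb
      _ = s * ‖x - u₀‖ / r := by rw [h1]
      _ ≤ ‖x - u₀‖ / r := by
          apply div_le_div_of_nonneg_right ?_ hr.le |>.trans_eq rfl
          nlinarith [norm_nonneg (x - u₀), hs.1.le, hs.2.le]
  -- The simplified Newton map.
  set F : U → U := fun z => z - A.symm (R z) with hF
  have hFderiv : ∀ z ∈ D, HasFDerivAt F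
      (ContinuousLinearMap.id ℝ U - As.comp (fderiv ℝ R z)) z := by
    intro z hz
    have h1 : HasFDerivAt (fun y => A.symm (R y)) (As.comp (fderiv ℝ R z)) z :=
      (As.hasFDerivAt).comp z (hdiff z hz).hasFDerivAt
    exact (hasFDerivAt_id z).sub h1
  -- Step 2: key mean value estimate with averaged bound.
  have key : ∀ x ∈ Metric.closedBall u₀ r, ∀ y ∈ Metric.closedBall u₀ r,
      ‖F y - F x‖ ≤ ((‖x - u₀‖ + ‖y - u₀‖) / (2 * r)) * ‖y - x‖ := by
    intro x hx y hy
    set a := ‖x - u₀‖ with ha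
    set b := ‖y - u₀‖ with hb
    have har : a ≤ r := by rw [ha, ← dist_eq_norm]; exact hx
    have hbr : b ≤ r := by rw [hb, ← dist_eq_norm]; exact hy
    have ha0 : 0 ≤ a := ha ▸ norm_nonneg _
    have hb0 : 0 ≤ b := hb ▸ norm_nonneg _
    clear_value a b
    set v := y - x with hv
    set ξ : ℝ → U := fun t => x + t • v with hξ
    have hξ0 : ξ 0 = x := by simp [hξ]
    have hξ1 : ξ 1 = y := by simp [hξ, hv]
    have hseg : ∀ t ∈ Icc (0:ℝ) 1, ‖ξ t - u₀‖ ≤ (1 - t) * a + t * b := by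
      intro t ht
      have hco : ξ t - u₀ = (1 - t) • (x - u₀) + t • (y - u₀) := by
        simp only [hξ, hv]; module
      rw [hco]
      calc ‖(1 - t) • (x - u₀) + t • (y - u₀)‖
          ≤ ‖(1 - t) • (x - u₀)‖ + ‖t • (y - u₀)‖ := norm_add_le _ _
        _ = (1 - t) * a + t * b := by
            rw [norm_smul, norm_smul, Real.norm_eq_abs, Real.norm_eq_abs,
              abs_of_nonneg (by linarith [ht.2] : (0:ℝ) ≤ 1 - t),
              abs_of_nonneg ht.1, ha, hb]
    have hsegball : ∀ t ∈ Icc (0:ℝ) 1, ξ t ∈ Metric.closedBall u₀ r := by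
      intro t ht
      rw [Metric.mem_closedBall, dist_eq_norm]
      refine (hseg t ht).trans ?_
      nlinarith [mul_nonneg (sub_nonneg.2 ht.2) (sub_nonneg.2 har),
        mul_nonneg ht.1 (sub_nonneg.2 hbr)]
    set h' : ℝ → U := fun t => (As.comp (fderiv ℝ R u₀ - fderiv ℝ R (ξ t))) v with hh'
    have hhd : ∀ t ∈ Icc (0:ℝ) 1, HasDerivAt (fun s => F (ξ s)) (h' t) t := by
      intro t ht
      have hξd : HasDerivAt ξ v t := by
        simpa [hξ] using ((hasDerivAt_id t).smul_const v).const_add x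
      have hFd := hFderiv (ξ t) (hball (hsegball t ht))
      have := hFd.comp_hasDerivAt t hξd
      convert this using 1
      show (As.comp (fderiv ℝ R u₀ - fderiv ℝ R (ξ t))) v
        = (ContinuousLinearMap.id ℝ U - As.comp (fderiv ℝ R (ξ t))) v
      have hAv : As (fderiv ℝ R u₀ v) = v := by
        rw [← hA]; exact A.symm_apply_apply v
      simp only [ContinuousLinearMap.comp_apply, ContinuousLinearMap.sub_apply,
        ContinuousLinearMap.id_apply, map_sub]
      rw [hAv]
      rfl
    set B : ℝ → ℝ := fun t => ((a * t + (b - a) * (t ^ 2 / 2)) / r) * ‖v‖ with hB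
    set B' : ℝ → ℝ := fun t => ((a + (b - a) * t) / r) * ‖v‖ with hB'
    have hBd : ∀ t : ℝ, HasDerivAt B (B' t) t := by
      intro t
      have h1 : HasDerivAt (fun t : ℝ => a * t + (b - a) * (t ^ 2 / 2))
          (a + (b - a) * t) t := by
        have ha1 : HasDerivAt (fun t : ℝ => a * t) a t := by
          simpa using (hasDerivAt_id t).const_mul a
        have ha2 : HasDerivAt (fun t : ℝ => t ^ 2 / 2) t t := by
          simpa using (hasDerivAt_pow 2 t).div_const 2
        exact ha1.add (ha2.const_mul (b - a))
      exact (h1.div_const r).mul_const ‖v‖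
    have hbound : ∀ t ∈ Ico (0:ℝ) 1, ‖h' t‖ ≤ B' t := by
      intro t ht
      have ht' : t ∈ Icc (0:ℝ) 1 := ⟨ht.1, ht.2.le⟩
      calc ‖h' t‖ ≤ ‖As.comp (fderiv ℝ R u₀ - fderiv ℝ R (ξ t))‖ * ‖v‖ :=
            ContinuousLinearMap.le_opNorm _ v
        _ ≤ (‖ξ t - u₀‖ / r) * ‖v‖ := by
            apply mul_le_mul_of_nonneg_right (hL (ξ t) (hsegball t ht')) (norm_nonneg v)
        _ ≤ B' t := by
            apply mul_le_mul_of_nonneg_right _ (norm_nonneg v)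
            apply div_le_div_of_nonneg_right (hseg t ht') hr.le |>.trans_eq ?_
            ring_nf
      -- done
    have hfc : ContinuousOn (fun s => F (ξ s) - F (ξ 0)) (Icc (0:ℝ) 1) := by
      intro t ht
      exact ((hhd t ht).continuousAt.continuousWithinAt).sub continuousWithinAt_const
    have hfd' : ∀ t ∈ Ico (0:ℝ) 1,
        HasDerivWithinAt (fun s => F (ξ s) - F (ξ 0)) (h' t) (Ici t) t := by
      intro t ht
      exact (((hhd t ⟨ht.1, ht.2.le⟩).sub_const _)).hasDerivWithinAt
    have hstart : ‖(fun s => F (ξ s) - F (ξ 0)) 0‖ ≤ B 0 := by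
      simp [hB]
    have := image_norm_le_of_norm_deriv_right_le_deriv_boundary hfc hfd' hstart hBd hbound
      (by exact ⟨zero_le_one, le_rfl⟩ : (1:ℝ) ∈ Icc (0:ℝ) 1)
    rw [hξ0, hξ1] at this
    calc ‖F y - F x‖ ≤ B 1 := this
      _ = ((a + b) / (2 * r)) * ‖v‖ := by
          show (a * 1 + (b - a) * (1 ^ 2 / 2)) / r * ‖v‖ = (a + b) / (2 * r) * ‖v‖
          have hs : (a * 1 + (b - a) * (1 ^ 2 / 2)) / r = (a + b) / (2 * r) := by
            field_simp
            ring
          rw [hs]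
      _ = ((a + b) / (2 * r)) * ‖y - x‖ := rfl
  -- Fixed points.
  have hFu : F u = u := by
    show u - A.symm (R u) = u
    rw [hRu, map_zero, sub_zero]
  have hFw : F w = w := by
    show w - A.symm (R w) = w
    rw [hRw, map_zero, sub_zero]
  have hFu₀ : ‖F u₀ - u₀‖ ≤ r / 2 := by
    have h : F u₀ - u₀ = -(A.symm (R u₀)) := by
      show u₀ - A.symm (R u₀) - u₀ = -(A.symm (R u₀))
      abel
    rw [h, norm_neg]; exact hinit
  -- Newton iterates.
  set X : ℕ → U := fun n => F^[n] u₀ with hX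
  have hXsucc : ∀ n, X (n + 1) = F (X n) := by
    intro n; rw [hX]; exact Function.iterate_succ_apply' F n u₀
  have hmain : ∀ (z : U), z ∈ Metric.closedBall u₀ r → F z = z →
      ∀ n : ℕ, ‖X n - u₀‖ ≤ r * (1 - nkE n) ∧ ‖z - X n‖ ≤ r * nkE n := by
    intro z hz hFz n
    have hzr : ‖z - u₀‖ ≤ r := by rw [← dist_eq_norm]; exact hz
    induction n with
    | zero =>
      constructor
      · simp [hX, nkE]
      · simpa [hX, nkE] using hzr
    | succ n ih =>
      obtain ⟨ih1, ih2⟩ := ih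
      obtain ⟨he0, he1⟩ := nkE_bounds n
      have hele : nkE n ≤ 1 := he1.trans (by
        rw [div_le_one (by positivity)]
        have : (0:ℝ) ≤ (n:ℝ) := Nat.cast_nonneg n
        linarith)
      have hXball : X n ∈ Metric.closedBall u₀ r := by
        rw [Metric.mem_closedBall, dist_eq_norm]
        refine ih1.trans ?_
        nlinarith
      have hE : nkE (n + 1) = nkE n - (nkE n) ^ 2 / 2 := rfl
      constructor
      · -- distance of the iterate to the center
        have k1 := key u₀ (Metric.mem_closedBall_self hr.le) (X n) hXball
        have hXn1 : X (n + 1) - u₀ = (F (X n) - F u₀) + (F u₀ - u₀) := by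
          rw [hXsucc n]; abel
        calc ‖X (n + 1) - u₀‖ = ‖(F (X n) - F u₀) + (F u₀ - u₀)‖ := by rw [hXn1]
          _ ≤ ‖F (X n) - F u₀‖ + ‖F u₀ - u₀‖ := norm_add_le _ _
          _ ≤ ((‖u₀ - u₀‖ + ‖X n - u₀‖) / (2 * r)) * ‖X n - u₀‖ + r / 2 := by
              exact add_le_add k1 hFu₀
          _ ≤ ((0 + r * (1 - nkE n)) / (2 * r)) * (r * (1 - nkE n)) + r / 2 := by
              have hc0 : (0:ℝ) ≤ ‖X n - u₀‖ := norm_nonneg _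
              have h1e : (0:ℝ) ≤ r * (1 - nkE n) := by nlinarith
              have hf : (‖u₀ - u₀‖ + ‖X n - u₀‖) / (2 * r) ≤
                  (0 + r * (1 - nkE n)) / (2 * r) := by
                apply div_le_div_of_nonneg_right _ (by positivity)
                simp only [sub_self, norm_zero]
                linarith
              have hmul := mul_le_mul hf ih1 hc0
                (by positivity : (0:ℝ) ≤ (0 + r * (1 - nkE n)) / (2 * r))
              linarith
          _ = r * (1 - nkE (n + 1)) := by
              rw [hE]; field_simp; ring
      · -- distance of the zero point to the iterate
        have k2 := key (X n) hXball z hz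
        calc ‖z - X (n + 1)‖ = ‖F z - F (X n)‖ := by rw [hXsucc n, hFz]
          _ ≤ ((‖X n - u₀‖ + ‖z - u₀‖) / (2 * r)) * ‖z - X n‖ := k2
          _ ≤ ((r * (1 - nkE n) + r) / (2 * r)) * (r * nkE n) := by
              have hzr' : ‖z - u₀‖ ≤ r := hzr
              have h1e : (0:ℝ) ≤ r * (1 - nkE n) := by nlinarith
              have hf : (‖X n - u₀‖ + ‖z - u₀‖) / (2 * r) ≤
                  (r * (1 - nkE n) + r) / (2 * r) := by
                apply div_le_div_of_nonneg_right _ (by positivity)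
                linarith
              have hfn : (0:ℝ) ≤ (r * (1 - nkE n) + r) / (2 * r) := by
                apply div_nonneg _ (by positivity)
                linarith
              exact mul_le_mul hf ih2 (norm_nonneg _) hfn
          _ = r * nkE (n + 1) := by
              rw [hE]; field_simp; ring
  -- Conclusion.
  have hdist : ∀ n : ℕ, ‖u - w‖ ≤ 2 * r * (2 / (n + 2)) := by
    intro n
    obtain ⟨-, hun⟩ := hmain u hu hFu n
    obtain ⟨-, hwn⟩ := hmain w hw hFw n
    obtain ⟨he0, he1⟩ := nkE_bounds n
    calc ‖u - w‖ = ‖(u - X n) + (X n - w)‖ := by abel_nf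
      _ ≤ ‖u - X n‖ + ‖X n - w‖ := norm_add_le _ _
      _ ≤ r * nkE n + r * nkE n := by
          refine add_le_add hun ?_
          rw [norm_sub_rev]; exact hwn
      _ = 2 * (r * nkE n) := by ring
      _ ≤ 2 * r * (2 / (n + 2)) := by
          rw [mul_assoc]
          gcongr
  have htend : Tendsto (fun n : ℕ => 2 * r * (2 / ((n:ℝ) + 2))) atTop (𝓝 0) := by
    have h1 : Tendsto (fun n : ℕ => (2:ℝ) / ((n:ℝ) + 2)) atTop (𝓝 0) := by
      have h := (tendsto_const_div_atTop_nhds_zero_nat (2:ℝ)).comp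
        (tendsto_add_atTop_nat 2)
      refine h.congr fun n => ?_
      simp only [Function.comp]
      push_cast
      ring
    simpa using h1.const_mul (2 * r)
  have : ‖u - w‖ ≤ 0 := ge_of_tendsto' htend hdist
  have := le_antisymm this (norm_nonneg _)
  rwa [norm_eq_zero, sub_eq_zero] at this
end

section
/- Cubic correction bound: Let U and V be real Banach spaces, R : U → V twice continuously (Fréchet) differentiable on an open set containing the segment from ũ to u, R(u) = 0, and R'(ũ) : U → V a continuous linear bijection with continuous inverse. Set u^C = ũ − R'(ũ)⁻¹ R(ũ), ẽ = u − ũ, e^C = u − u^C. Suppose there are constants Ĉ > 0 and K ≥ 0 such that the operator norm of R'(ũ)⁻¹ is at most 1/Ĉ, and ‖R''(w)‖ ≤ K ‖w‖ for every w on the segment {ũ + s ẽ : s ∈ [0,1]}, where ‖R''(w)‖ is the operator norm of the second derivative as a continuous bilinear map U × U → V. Then ‖e^C‖ ≤ (K / (2Ĉ)) · ( ‖ũ‖ + ‖ẽ‖ ) · ‖ẽ‖², and in particular, with C = K/(2Ĉ), ‖e^C‖ ≤ C ‖ũ‖ ‖ẽ‖² + C ‖ẽ‖³. -/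
/-- Cubic correction bound: if `‖R'(ut)⁻¹‖ ≤ 1/Ĉ` and `‖R''(w)‖ ≤ K‖w‖` along the segment
from `ut` to `u`, then `‖u - uC‖ ≤ (K/(2Ĉ))·(‖ut‖ + ‖u - ut‖)·‖u - ut‖²` and, with
`C = K/(2Ĉ)`, `‖u - uC‖ ≤ C‖ut‖‖u - ut‖² + C‖u - ut‖³`, where
`uC = ut - R'(ut)⁻¹ (R ut)` and `ut` plays the role of `ũ`. -/
theorem corrector_cubic_bound
    {U V : Type*} [NormedAddCommGroup U] [NormedSpace ℝ U] [CompleteSpace U]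
    [NormedAddCommGroup V] [NormedSpace ℝ V] [CompleteSpace V]
    (R : U → V) (u ut : U) (s : Set U) (hs : IsOpen s)
    (hseg : segment ℝ ut u ⊆ s)
    (hR : ContDiffOn ℝ 2 R s)
    (hu : R u = 0)
    (A : U ≃L[ℝ] V) (hA : (A : U →L[ℝ] V) = fderiv ℝ R ut)
    (Chat K : ℝ) (hChat : 0 < Chat) (hK : 0 ≤ K)
    (hinv : ‖(A.symm : V →L[ℝ] U)‖ ≤ 1 / Chat)
    (hsecond : ∀ t ∈ Set.Icc (0 : ℝ) 1,
      ‖fderiv ℝ (fderiv ℝ R) (ut + t • (u - ut))‖ ≤ K * ‖ut + t • (u - ut)‖) :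
    ‖u - (ut - A.symm (R ut))‖ ≤
        (K / (2 * Chat)) * (‖ut‖ + ‖u - ut‖) * ‖u - ut‖ ^ 2 ∧
      ‖u - (ut - A.symm (R ut))‖ ≤
        (K / (2 * Chat)) * ‖ut‖ * ‖u - ut‖ ^ 2 + (K / (2 * Chat)) * ‖u - ut‖ ^ 3 := by
  set e := u - ut with he
  set M : ℝ := ‖ut‖ + ‖e‖ with hM
  have hM0 : 0 ≤ M := add_nonneg (norm_nonneg _) (norm_nonneg _)
  -- membership of segment points
  have hmem : ∀ t ∈ Set.Icc (0 : ℝ) 1, ut + t • e ∈ segment ℝ ut u := by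
    intro t ht
    rw [segment_eq_image']
    exact ⟨t, ht, rfl⟩
  have hmem' : ∀ t ∈ Set.Icc (0 : ℝ) 1, ut + t • e ∈ s := fun t ht => hseg (hmem t ht)
  -- differentiability facts
  have hdiff : ∀ x ∈ s, DifferentiableAt ℝ R x := fun x hx =>
    (hR.differentiableOn (by norm_num)).differentiableAt (hs.mem_nhds hx)
  have hR' : ContDiffOn ℝ 1 (fderiv ℝ R) s :=
    hR.fderiv_of_isOpen hs (by norm_num)
  have hdiff' : ∀ x ∈ s, HasFDerivAt (fderiv ℝ R) (fderiv ℝ (fderiv ℝ R) x) x := fun x hx =>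
    ((hR'.differentiableOn (by norm_num)).differentiableAt (hs.mem_nhds hx)).hasFDerivAt
  -- Lipschitz-type bound on fderiv R along the segment
  have hconv : Convex ℝ (segment ℝ ut u) := convex_segment _ _
  have hut_mem : ut ∈ segment ℝ ut u := left_mem_segment _ _ _
  have hfd : ∀ x ∈ segment ℝ ut u,
      ‖fderiv ℝ R x - fderiv ℝ R ut‖ ≤ (K * M) * ‖x - ut‖ := by
    intro x hx
    refine hconv.norm_image_sub_le_of_norm_hasFDerivWithin_le
      (f' := fun x => fderiv ℝ (fderiv ℝ R) x)
      (fun y hy => ((hdiff' y (hseg hy)).hasFDerivWithinAt)) ?_ hut_mem hx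
    intro y hy
    rw [segment_eq_image'] at hy
    obtain ⟨t, ht, rfl⟩ := hy
    refine (hsecond t ht).trans (mul_le_mul_of_nonneg_left ?_ hK)
    calc ‖ut + t • e‖ ≤ ‖ut‖ + ‖t • e‖ := norm_add_le _ _
      _ ≤ ‖ut‖ + ‖e‖ := by
          refine add_le_add le_rfl ?_
          rw [norm_smul, Real.norm_eq_abs, abs_of_nonneg ht.1]
          exact mul_le_of_le_one_left (norm_nonneg _) ht.2
  -- the auxiliary function φ
  set φ : ℝ → V := fun t => R (ut + t • e) - t • (fderiv ℝ R ut e) with hφdef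
  have hφ' : ∀ t ∈ Set.Icc (0 : ℝ) 1,
      HasDerivAt φ (fderiv ℝ R (ut + t • e) e - fderiv ℝ R ut e) t := by
    intro t ht
    have h1 : HasDerivAt (fun t : ℝ => ut + t • e) e t := by
      simpa using ((hasDerivAt_id t).smul_const e).const_add ut
    have h2 : HasDerivAt (fun t : ℝ => R (ut + t • e)) (fderiv ℝ R (ut + t • e) e) t :=
      ((hdiff _ (hmem' t ht)).hasFDerivAt).comp_hasDerivAt t h1
    have h3 : HasDerivAt (fun t : ℝ => t • (fderiv ℝ R ut e)) (fderiv ℝ R ut e) t := by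
      simpa using (hasDerivAt_id t).smul_const (fderiv ℝ R ut e)
    exact h2.sub h3
  -- mean value with boundary `B t = K*M*‖e‖² * t² / 2`
  have key : ‖φ 1 - φ 0‖ ≤ K * M * ‖e‖ ^ 2 / 2 := by
    set B : ℝ → ℝ := fun t => K * M * ‖e‖ ^ 2 * t ^ 2 / 2 with hBdef
    have hB : ∀ t : ℝ, HasDerivAt B (K * M * ‖e‖ ^ 2 * t) t := by
      intro t
      have : HasDerivAt (fun t : ℝ => t ^ 2) (2 * t) t := by
        simpa using hasDerivAt_pow 2 t
      have := (this.const_mul (K * M * ‖e‖ ^ 2)).div_const 2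
      rw [show K * M * ‖e‖ ^ 2 * t = K * M * ‖e‖ ^ 2 * (2 * t) / 2 by ring]
      exact this
    have hg : ContinuousOn (fun t => φ t - φ 0) (Set.Icc 0 1) := by
      intro t ht
      exact ((hφ' t ht).continuousAt.sub continuousAt_const).continuousWithinAt
    have hg' : ∀ t ∈ Set.Ico (0 : ℝ) 1,
        HasDerivWithinAt (fun t => φ t - φ 0)
          (fderiv ℝ R (ut + t • e) e - fderiv ℝ R ut e) (Set.Ici t) t := fun t ht => by
      exact (hasDerivWithinAt_sub_const_iff (φ 0)).2
        ((hφ' t (Set.Ico_subset_Icc_self ht)).hasDerivWithinAt (s := Set.Ici t))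
    have bound : ∀ t ∈ Set.Ico (0 : ℝ) 1,
        ‖fderiv ℝ R (ut + t • e) e - fderiv ℝ R ut e‖ ≤ K * M * ‖e‖ ^ 2 * t := by
      intro t ht
      have h1 : ‖(fderiv ℝ R (ut + t • e) - fderiv ℝ R ut) e‖ ≤
          ‖fderiv ℝ R (ut + t • e) - fderiv ℝ R ut‖ * ‖e‖ :=
        ContinuousLinearMap.le_opNorm _ _
      have h2 := hfd (ut + t • e) (hmem t (Set.Ico_subset_Icc_self ht))
      have h3 : ‖ut + t • e - ut‖ = t * ‖e‖ := by
        rw [add_sub_cancel_left, norm_smul, Real.norm_eq_abs, abs_of_nonneg ht.1]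
      rw [h3] at h2
      calc ‖fderiv ℝ R (ut + t • e) e - fderiv ℝ R ut e‖
          = ‖(fderiv ℝ R (ut + t • e) - fderiv ℝ R ut) e‖ := by
            simp [ContinuousLinearMap.sub_apply]
        _ ≤ ‖fderiv ℝ R (ut + t • e) - fderiv ℝ R ut‖ * ‖e‖ := h1
        _ ≤ (K * M) * (t * ‖e‖) * ‖e‖ :=
            mul_le_mul_of_nonneg_right h2 (norm_nonneg _)
        _ = K * M * ‖e‖ ^ 2 * t := by ring
    have ha : ‖φ 0 - φ 0‖ ≤ B 0 := by simp [hBdef]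
    have := image_norm_le_of_norm_deriv_right_le_deriv_boundary hg hg' ha hB bound
      (Set.right_mem_Icc.2 zero_le_one)
    simpa [hBdef] using this
  -- identify φ 1 - φ 0 with -(R ut + A e)
  have hφ10 : φ 1 - φ 0 = -(R ut + A e) := by
    have h1 : ut + e = u := by rw [he]; abel
    have hAe : (fderiv ℝ R ut) e = A e := by rw [← hA]; rfl
    have : φ 1 - φ 0 = R u - (fderiv ℝ R ut) e - R ut := by
      simp [hφdef, h1]
    rw [this, hu, hAe]
    abel
  have hid : u - (ut - A.symm (R ut)) = -(A.symm (φ 1 - φ 0)) := by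
    rw [hφ10]
    have : A.symm ((A : U →L[ℝ] V) e) = e := A.symm_apply_apply e
    simp only [map_add, map_neg, neg_neg]
    rw [show A e = (A : U →L[ℝ] V) e from rfl, this, he]
    abel
  have main : ‖u - (ut - A.symm (R ut))‖ ≤ (K / (2 * Chat)) * M * ‖e‖ ^ 2 := by
    rw [hid, norm_neg]
    calc ‖A.symm (φ 1 - φ 0)‖
        ≤ ‖(A.symm : V →L[ℝ] U)‖ * ‖φ 1 - φ 0‖ :=
          (A.symm : V →L[ℝ] U).le_opNorm _
      _ ≤ (1 / Chat) * (K * M * ‖e‖ ^ 2 / 2) := by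
          apply mul_le_mul hinv key (norm_nonneg _)
          positivity
      _ = (K / (2 * Chat)) * M * ‖e‖ ^ 2 := by ring
  constructor
  · exact main
  · refine main.trans (le_of_eq ?_)
    rw [hM]
    ring
end
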